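/- arXiv:2303.00405 — 3 statements merged into one kernel-verified Lean document; each statement's English description precedes it below -/
import Mathlib

section
/- Let ω : (0,R) → (0,∞) be continuous with (2π^{d/2}/Γ(d/2)) ∫₀^R ω(s) s^{d−1} ds = 1, let μ_ω be the measure on the open ball B^d(0,R) with density ω(‖x‖), and let μ₁ be the standard Gaussian measure on ℝ^d. If ρ : (0,∞) → (0,R) satisfies ∫₀^{ρ(r)} ω(s) s^{d−1} ds = (1/(2π^{d/2})) γ(d/2, r²/2) for all r > 0, where γ is the lower incomplete gamma function, then the map φ(x) = (ρ(‖x‖)/‖x‖) x pushes μ₁ forward to μ_ω. -/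
/-!
In polar coordinates `x = r θ` an additive Haar measure on `ℝ^d` is `σ ⊗ r^{d-1} dr`, with `σ`
the surface measure on the unit sphere, and the map `φ` becomes `(θ, r) ↦ (θ, ρ r)`. Both
measures are radial, so it suffices to show that `ρ` pushes the radial part
`r^{d-1} (2π)^{-d/2} e^{-r²/2} dr` of the Gaussian forward to the radial part
`s^{d-1} ω(s) ds` of `μ_ω`. The distribution functions of these measures are
`γ(d/2, r²/2) / (2π^{d/2})` and `∫₀^c ω(s) s^{d-1} ds`, both continuous and strictly increasing
with the same limit `Γ(d/2) / (2π^{d/2})` (this is the normalisation of `ω`), and the defining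
equation of `ρ` says exactly that `ρ` intertwines them.
-/

open MeasureTheory Real Set

/-- The lower incomplete gamma function `γ(t,x) = ∫₀ˣ s^{t−1} e^{−s} ds`. -/
noncomputable def lowerGamma (t x : ℝ) : ℝ := ∫ s in (0:ℝ)..x, s ^ (t - 1) * Real.exp (-s)

open Measure Filter Topology

section LowerGamma

variable {t : ℝ}

lemma integrableOn_rpow_mul_exp_neg_Ioi (ht : 0 < t) :
    IntegrableOn (fun s : ℝ => s ^ (t - 1) * exp (-s)) (Ioi 0) :=
  (GammaIntegral_convergent ht).congr_fun (fun _ _ => mul_comm _ _) measurableSet_Ioi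

lemma continuousOn_lowerGamma (ht : 0 < t) : ContinuousOn (lowerGamma t) (Ici 0) := by
  intro x (hx : 0 ≤ x)
  have hint : IntegrableOn (fun s : ℝ => s ^ (t - 1) * exp (-s)) (uIcc 0 (x + 1)) := by
    rw [uIcc_of_le (by linarith), integrableOn_Icc_iff_integrableOn_Ioc]
    exact (integrableOn_rpow_mul_exp_neg_Ioi ht).mono_set Ioc_subset_Ioi_self
  have hcont := intervalIntegral.continuousOn_primitive_interval hint
  rw [uIcc_of_le (by linarith), ← Ici_inter_Iic] at hcont
  exact (hcont x ⟨hx, by simp⟩).mono_of_mem_nhdsWithin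
    (inter_mem_nhdsWithin _ (Iic_mem_nhds (by linarith)))

lemma hasDerivAt_lowerGamma (ht : 0 < t) {x : ℝ} (hx : 0 < x) :
    HasDerivAt (lowerGamma t) (x ^ (t - 1) * exp (-x)) x := by
  have hcont : ContinuousOn (fun s : ℝ => s ^ (t - 1) * exp (-s)) (Ioi 0) := fun s hs =>
    ((continuousAt_id.rpow_const (Or.inl (ne_of_gt hs))).mul
      (continuous_exp.comp continuous_neg).continuousAt).continuousWithinAt
  exact intervalIntegral.integral_hasDerivAt_right
    ((intervalIntegrable_iff_integrableOn_Ioc_of_le hx.le).2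
      ((integrableOn_rpow_mul_exp_neg_Ioi ht).mono_set Ioc_subset_Ioi_self))
    (hcont.stronglyMeasurableAtFilter isOpen_Ioi x hx) (hcont.continuousAt (Ioi_mem_nhds hx))

lemma strictMonoOn_lowerGamma (ht : 0 < t) : StrictMonoOn (lowerGamma t) (Ici 0) :=
  strictMonoOn_of_deriv_pos (convex_Ici 0) (continuousOn_lowerGamma ht) fun x hx => by
    rw [interior_Ici] at hx
    rw [(hasDerivAt_lowerGamma ht hx).deriv]
    exact mul_pos (rpow_pos_of_pos hx _) (exp_pos _)

lemma tendsto_lowerGamma_atTop (ht : 0 < t) : Tendsto (lowerGamma t) atTop (𝓝 (Gamma t)) := by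
  rw [Gamma_eq_integral ht]
  simp_rw [mul_comm (exp _)]
  exact intervalIntegral_tendsto_integral_Ioi 0 (integrableOn_rpow_mul_exp_neg_Ioi ht) tendsto_id

end LowerGamma

lemma integral_pow_mul_exp_neg_sq_div_two (n : ℕ) {b : ℝ} (hb : 0 ≤ b) :
    ∫ r in (0:ℝ)..b, r ^ n * exp (-r ^ 2 / 2) =
      2 ^ (((n:ℝ) - 1) / 2) * lowerGamma (((n:ℝ) + 1) / 2) (b ^ 2 / 2) := by
  have ht : 0 < ((n:ℝ) + 1) / 2 := by positivity
  have hcont : ContinuousOn (fun r : ℝ => 2 ^ (((n:ℝ) - 1) / 2) *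
      lowerGamma (((n:ℝ) + 1) / 2) (r ^ 2 / 2)) (Icc 0 b) :=
    continuousOn_const.mul <| (continuousOn_lowerGamma ht).comp (by fun_prop)
      fun r _ => mem_Ici.2 (by positivity)
  have hderiv : ∀ r ∈ Ioo 0 b, HasDerivAt (fun r : ℝ => 2 ^ (((n:ℝ) - 1) / 2) *
      lowerGamma (((n:ℝ) + 1) / 2) (r ^ 2 / 2)) (r ^ n * exp (-r ^ 2 / 2)) r := by
    intro r ⟨hr, _⟩
    refine (((hasDerivAt_lowerGamma ht (by positivity : 0 < r ^ 2 / 2)).comp r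
      ((hasDerivAt_pow 2 r).div_const 2)).const_mul (2 ^ (((n:ℝ) - 1) / 2))).congr_deriv ?_
    rw [show ((n:ℝ) + 1) / 2 - 1 = ((n:ℝ) - 1) / 2 by ring, div_rpow (by positivity) zero_le_two,
      ← rpow_natCast r 2, ← rpow_mul hr.le, show ((2:ℕ):ℝ) * (((n:ℝ) - 1) / 2) = n - 1 by
        push_cast; ring, rpow_sub_one hr.ne', rpow_natCast, neg_div]
    field_simp
    ring
  rw [intervalIntegral.integral_eq_sub_of_hasDerivAt_of_le hb hcont hderiv
    (by apply Continuous.intervalIntegrable; fun_prop)]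
  simp [lowerGamma]

/-- The radial distribution function `∫₀ʳ s^{d-1} (2π)^{-d/2} e^{-s²/2} ds` of the standard
Gaussian, in the closed form given by `integral_pow_mul_exp_neg_sq_div_two`. -/
noncomputable def gaussianRadialCdf (d : ℕ) (r : ℝ) : ℝ :=
  1 / (2 * π ^ ((d:ℝ) / 2)) * lowerGamma ((d:ℝ) / 2) (r ^ 2 / 2)

section GaussianRadialCdf

variable {d : ℕ}

lemma gaussianRadialCdf_zero : gaussianRadialCdf d 0 = 0 := by
  simp [gaussianRadialCdf, lowerGamma]

lemma continuousOn_gaussianRadialCdf (hd : 1 ≤ d) : ContinuousOn (gaussianRadialCdf d) (Ici 0) :=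
  continuousOn_const.mul <| (continuousOn_lowerGamma (by positivity)).comp (by fun_prop)
    fun r _ => mem_Ici.2 (by positivity)

lemma strictMonoOn_gaussianRadialCdf (hd : 1 ≤ d) : StrictMonoOn (gaussianRadialCdf d) (Ici 0) :=
  fun a (ha : 0 ≤ a) b (hb : 0 ≤ b) hab =>
    mul_lt_mul_of_pos_left (strictMonoOn_lowerGamma (by positivity) (mem_Ici.2 (by positivity))
      (mem_Ici.2 (by positivity)) (by gcongr)) (by positivity)

lemma tendsto_gaussianRadialCdf_atTop (hd : 1 ≤ d) :
    Tendsto (gaussianRadialCdf d) atTop (𝓝 (1 / (2 * π ^ ((d:ℝ) / 2)) * Gamma ((d:ℝ) / 2))) :=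
  ((tendsto_lowerGamma_atTop (by positivity)).comp
    ((tendsto_pow_atTop two_ne_zero).atTop_div_const two_pos)).const_mul _

end GaussianRadialCdf

lemma strictMonoOn_integral_of_pos {w : ℝ → ℝ} {R : ℝ} (hw : ∀ s ∈ Ioo 0 R, 0 < w s)
    (hint : IntegrableOn w (Ioc 0 R)) :
    StrictMonoOn (fun a => ∫ s in (0:ℝ)..a, w s) (Icc 0 R) := by
  have hii : ∀ {a}, a ∈ Icc (0:ℝ) R → IntervalIntegrable w volume 0 a := fun ha =>
    (intervalIntegrable_iff_integrableOn_Ioc_of_le ha.1).2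
      (hint.mono_set (Ioc_subset_Ioc_right ha.2))
  intro a ha b hb hab
  have hpos := intervalIntegral.intervalIntegral_pos_of_pos_on ((hii ha).symm.trans (hii hb))
    (fun s hs => hw s ⟨ha.1.trans_lt hs.1, hs.2.trans_le hb.2⟩) hab
  rw [← intervalIntegral.integral_interval_sub_left (hii hb) (hii ha)] at hpos
  exact sub_pos.1 hpos

lemma ContinuousOn.measurable_indicator {α γ : Type*} [TopologicalSpace α] [MeasurableSpace α]
    [OpensMeasurableSpace α] [TopologicalSpace γ] [MeasurableSpace γ] [BorelSpace γ] [Zero γ]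
    {f : α → γ} {s : Set α} (hf : ContinuousOn f s) (hs : MeasurableSet s) :
    Measurable (s.indicator f) := by
  classical
  rw [← piecewise_eq_indicator]
  exact hf.measurable_piecewise continuous_zero.continuousOn hs

noncomputable def radialMeasure (n : ℕ) (f : ℝ → ℝ) : Measure (Ioi (0:ℝ)) :=
  (volumeIoiPow n).withDensity fun r => ENNReal.ofReal (f r)

namespace radialMeasure

variable {n : ℕ}

instance (f : ℝ → ℝ) : SigmaFinite (radialMeasure n f) := SigmaFinite.withDensity_ofReal _

lemma apply_Iic {f : ℝ → ℝ} (hf : Measurable f) (c : Ioi (0:ℝ))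
    (hf₀ : ∀ r ∈ Ioc 0 (c:ℝ), 0 ≤ f r) (hint : IntegrableOn (fun r => r ^ n * f r) (Ioc 0 c)) :
    radialMeasure n f (Iic c) = ENNReal.ofReal (∫ r in (0:ℝ)..c, r ^ n * f r) := by
  rw [radialMeasure, withDensity_apply _ measurableSet_Iic, volumeIoiPow,
    restrict_withDensity measurableSet_Iic, lintegral_withDensity_eq_lintegral_mul _
      (by fun_prop) (by fun_prop)]
  simp only [Pi.mul_apply]
  rw [setLIntegral_subtype measurableSet_Ioi _
      fun r => ENNReal.ofReal (r ^ n) * ENNReal.ofReal (f r), image_subtype_val_Ioi_Iic,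
    intervalIntegral.integral_of_le c.2.le, ofReal_integral_eq_lintegral_ofReal hint]
  · refine setLIntegral_congr_fun measurableSet_Ioc fun r hr => ?_
    rw [ENNReal.ofReal_mul (pow_nonneg hr.1.le _)]
  · filter_upwards [ae_restrict_mem measurableSet_Ioc] with r hr
    exact mul_nonneg (pow_nonneg hr.1.le _) (hf₀ r hr)

lemma gaussian_apply_Iic {d : ℕ} (hd : 1 ≤ d) (r : Ioi (0:ℝ)) :
    radialMeasure (d - 1) (fun s => (2 * π) ^ (-(d:ℝ) / 2) * exp (-s ^ 2 / 2)) (Iic r) =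
      ENNReal.ofReal (gaussianRadialCdf d r) := by
  rw [apply_Iic (by fun_prop) r (fun _ _ => by positivity)
    (Continuous.integrableOn_Ioc (by fun_prop))]
  simp_rw [mul_left_comm _ ((2 * π) ^ (-(d:ℝ) / 2))]
  rw [intervalIntegral.integral_const_mul, integral_pow_mul_exp_neg_sq_div_two _ (le_of_lt r.2),
    Nat.cast_pred hd, sub_add_cancel, ← mul_assoc, gaussianRadialCdf]
  congr 2
  rw [mul_rpow zero_le_two pi_pos.le, neg_div, rpow_neg zero_le_two, rpow_neg pi_pos.le,
    show ((d:ℝ) - 1 - 1) / 2 = d / 2 - 1 by ring, rpow_sub_one two_ne_zero]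
  field_simp

lemma indicator_apply_Iic {ω : ℝ → ℝ} {R : ℝ} (hR : 0 < R)
    (hωc : ContinuousOn ω (Ioo 0 R)) (hω : ∀ s ∈ Ioo 0 R, 0 ≤ ω s)
    (hint : IntegrableOn (fun s => ω s * s ^ n) (Ioc 0 R)) (c : Ioi (0:ℝ)) :
    radialMeasure n ((Ioo 0 R).indicator ω) (Iic c) =
      ENNReal.ofReal (∫ s in (0:ℝ)..min c R, ω s * s ^ n) := by
  have hc : (0:ℝ) < c := c.2
  have hmul : (fun r => r ^ n * (Ioo 0 R).indicator ω r) =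
      (Ioo 0 R).indicator fun s => ω s * s ^ n := by
    ext r
    by_cases hr : r ∈ Ioo 0 R <;> simp [hr, mul_comm]
  rw [apply_Iic (hωc.measurable_indicator measurableSet_Ioo) c
      (fun r _ => indicator_nonneg hω r), hmul,
    intervalIntegral.integral_of_le hc.le, intervalIntegral.integral_of_le (le_min hc.le hR.le),
    setIntegral_indicator measurableSet_Ioo]
  · congr 1
    refine setIntegral_congr_set ?_
    rcases lt_or_ge (c:ℝ) R with hcR | hRc
    · have hsub : Ioc 0 (c:ℝ) ⊆ Ioo 0 R := fun s hs => ⟨hs.1, hs.2.trans_lt hcR⟩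
      rw [min_eq_left hcR.le, inter_eq_left.2 hsub]
      exact .rfl
    · have hsub : Ioo 0 R ⊆ Ioc 0 (c:ℝ) := fun s hs => ⟨hs.1, hs.2.le.trans hRc⟩
      rw [min_eq_right hRc, inter_eq_right.2 hsub]
      exact Ioo_ae_eq_Ioc
  · rw [hmul]
    exact ((hint.mono_set Ioo_subset_Ioc_self).integrable_indicator measurableSet_Ioo).integrableOn

end radialMeasure

lemma map_eq_of_cdf_comp_eq {ν₁ ν₂ : Measure (Ioi (0:ℝ))} {F T : ℝ → ℝ} {R : ℝ}
    (hF : StrictMonoOn F (Icc 0 R)) (hT : StrictMonoOn T (Ici 0)) (hTc : ContinuousOn T (Ici 0))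
    (hT0 : T 0 = F 0) (hTlim : Tendsto T atTop (𝓝 (F R)))
    (hν₁ : ∀ r : Ioi (0:ℝ), ν₁ (Iic r) = ENNReal.ofReal (T r))
    (hν₂ : ∀ c : Ioi (0:ℝ), ν₂ (Iic c) = ENNReal.ofReal (F (min c R)))
    {ρ : Ioi (0:ℝ) → Ioi (0:ℝ)} (hρm : Measurable ρ) (hρR : ∀ r, (ρ r : ℝ) < R)
    (hFρ : ∀ r, F (ρ r) = T r) :
    ν₁.map ρ = ν₂ := by
  have hρF : ∀ r, (ρ r : ℝ) ∈ Icc 0 R := fun r => ⟨le_of_lt (ρ r).2, (hρR r).le⟩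
  have huniv : ν₁ univ = ENNReal.ofReal (F R) := by
    refine tendsto_nhds_unique (tendsto_measure_Iic_atTop ν₁) ?_
    simp_rw [hν₁]
    exact (ENNReal.tendsto_ofReal hTlim).comp (tendsto_Ioi_atTop.1 tendsto_id)
  have : IsFiniteMeasure (ν₁.map ρ) :=
    ⟨by rw [map_apply hρm .univ, preimage_univ, huniv]; exact ENNReal.ofReal_lt_top⟩
  refine ext_of_Iic _ _ fun c => ?_
  rw [map_apply hρm measurableSet_Iic, hν₂]
  rcases lt_or_ge (c : ℝ) R with hcR | hRc
  · have hc0 : (0:ℝ) < c := c.2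
    have hc : (c : ℝ) ∈ Icc 0 R := ⟨hc0.le, hcR.le⟩
    have hFc : F 0 < F c := hF ⟨le_rfl, hc.2.trans' hc0.le⟩ hc hc0
    obtain ⟨X, hX, hX0⟩ : ∃ X, F c < T X ∧ 0 ≤ X :=
      ((hTlim.eventually (lt_mem_nhds (hF hc ⟨hc0.le.trans hcR.le, le_rfl⟩ hcR))).and
        (eventually_ge_atTop 0)).exists
    obtain ⟨b, hb, hTb⟩ := intermediate_value_Icc hX0 (hTc.mono Icc_subset_Ici_self)
      ⟨(hT0.trans_lt hFc).le, hX.le⟩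
    have hb0 : 0 < b := lt_of_le_of_ne hb.1 fun h => by rw [← h, hT0] at hTb; linarith
    have hpre : ρ ⁻¹' Iic c = Iic ⟨b, hb0⟩ := by
      ext r
      simp only [mem_preimage, mem_Iic, ← Subtype.coe_le_coe]
      rw [← hF.le_iff_le (hρF r) hc, hFρ, ← hTb, hT.le_iff_le (mem_Ici.2 (le_of_lt r.2)) hb0.le]
    rw [hpre, hν₁, min_eq_left hcR.le, hTb]
  · rw [show ρ ⁻¹' Iic c = univ from eq_univ_of_forall fun r => (hρR r).le.trans hRc, huniv,
      min_eq_right hRc]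

lemma withDensity_norm_restrict_ball {E : Type*} [NormedAddCommGroup E] [MeasurableSpace E]
    [OpensMeasurableSpace E] (μ : Measure E) [NullSingletonClass μ] (ω : ℝ → ℝ) (R : ℝ) :
    (μ.restrict (Metric.ball 0 R)).withDensity (fun x => ENNReal.ofReal (ω ‖x‖)) =
      μ.withDensity fun x => ENNReal.ofReal ((Ioo 0 R).indicator ω ‖x‖) := by
  rw [← withDensity_indicator measurableSet_ball]
  refine withDensity_congr_ae ?_
  filter_upwards [compl_mem_ae_iff.2 (measure_singleton (0:E))] with x hx
  simp only [indicator, Metric.mem_ball, dist_zero_right, mem_Ioo, norm_pos_iff.2 hx, true_and]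
  split_ifs <;> simp

section Polar

variable {E : Type*} [NormedAddCommGroup E] [NormedSpace ℝ E] [MeasurableSpace E] [BorelSpace E]
  [FiniteDimensional ℝ E] [Nontrivial E] (μ : Measure E) [μ.IsAddHaarMeasure]

lemma withDensity_norm_eq_map_prod_radialMeasure {f : ℝ → ℝ} (hf : Measurable f) :
    μ.withDensity (fun x => ENNReal.ofReal (f ‖x‖)) =
      (μ.toSphere.prod (radialMeasure (Module.finrank ℝ E - 1) f)).map
        (Subtype.val ∘ (homeomorphUnitSphereProd E).symm) := by
  set P := homeomorphUnitSphereProd E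
  have hι : Measurable (Subtype.val ∘ P.symm) := measurable_subtype_coe.comp P.symm.measurable
  have hcompl : MeasurableSet ({0}ᶜ : Set E) := (measurableSet_singleton 0).compl
  ext s hs
  rw [withDensity_apply _ hs, map_apply hι hs, radialMeasure, prod_withDensity_right (by fun_prop),
    withDensity_apply _ (hι hs)]
  calc ∫⁻ x in s, ENNReal.ofReal (f ‖x‖) ∂μ
      = ∫⁻ x in ({0}ᶜ : Set E) ∩ s, ENNReal.ofReal (f ‖x‖) ∂μ := by
        rw [inter_comm, ← restrict_restrict hs, restrict_compl_singleton]
    _ = ∫⁻ x : ({0}ᶜ : Set E) in Subtype.val ⁻¹' s, ENNReal.ofReal (f ‖(x : E)‖)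
          ∂μ.comap Subtype.val := by
        rw [setLIntegral_subtype hcompl _ fun x : E => ENNReal.ofReal (f ‖x‖),
          Subtype.image_preimage_coe]
    _ = ∫⁻ p in P '' (Subtype.val ⁻¹' s), ENNReal.ofReal (f p.2) ∂(μ.toSphere.prod _) := by
        rw [← μ.measurePreserving_homeomorphUnitSphereProd.setLIntegral_comp_emb
          P.measurableEmbedding]
        simp
    _ = _ := by
        rw [P.image_eq_preimage_symm]
        rfl

lemma map_radialMap_withDensity_norm {f g ρ : ℝ → ℝ} (hf : Measurable f) (hg : Measurable g)
    (hρ : MapsTo ρ (Ioi 0) (Ioi 0)) (hρm : Measurable (hρ.restrict ρ (Ioi 0) (Ioi 0)))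
    (h : (radialMeasure (Module.finrank ℝ E - 1) f).map (hρ.restrict ρ (Ioi 0) (Ioi 0)) =
      radialMeasure (Module.finrank ℝ E - 1) g) :
    (μ.withDensity fun x => ENNReal.ofReal (f ‖x‖)).map (fun x => (ρ ‖x‖ / ‖x‖) • x) =
      μ.withDensity fun x => ENNReal.ofReal (g ‖x‖) := by
  set P := homeomorphUnitSphereProd E
  set ρ' := hρ.restrict ρ (Ioi 0) (Ioi 0)
  have hι : Measurable (Subtype.val ∘ P.symm) := measurable_subtype_coe.comp P.symm.measurable
  have hcomm : (fun x : E => (ρ ‖x‖ / ‖x‖) • x) ∘ (Subtype.val ∘ P.symm) =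
      (Subtype.val ∘ P.symm) ∘ Prod.map id ρ' := by
    ext ⟨θ, r⟩ : 1
    have hr : (0:ℝ) < r := r.2
    have hθ : ‖(θ : E)‖ = 1 := norm_eq_of_mem_sphere θ
    simp [P, ρ', norm_smul, hθ, abs_of_pos hr, smul_smul, hr.ne']
  have hφ : Measurable fun x : E => (ρ ‖x‖ / ‖x‖) • x := by
    refine measurable_of_restrict_of_restrict_compl (measurableSet_singleton 0)
      Subsingleton.measurable ?_
    have : ({0}ᶜ : Set E).domRestrict (fun x => (ρ ‖x‖ / ‖x‖) • x) =
        (Subtype.val ∘ P.symm) ∘ Prod.map id ρ' ∘ P := by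
      rw [← Function.comp_assoc, ← hcomm]
      ext x
      simp
    rw [this]
    exact hι.comp ((measurable_id.prodMap hρm).comp P.measurable)
  rw [withDensity_norm_eq_map_prod_radialMeasure μ hf,
    withDensity_norm_eq_map_prod_radialMeasure μ hg, map_map hφ hι, hcomm,
    ← map_map hι (measurable_id.prodMap hρm), ← map_prod_map _ _ measurable_id hρm,
    Measure.map_id, h]

end Polar

/-- If `ω : (0,R) → (0,∞)` is continuous and normalized so that `μ_ω` (the measure on the
ball `B^d(0,R)` with density `ω(‖x‖)`) is a probability measure, and `ρ` solves
`∫₀^{ρ(r)} ω(s) s^{d−1} ds = γ(d/2, r²/2)/(2π^{d/2})`, then `φ(x) = (ρ(‖x‖)/‖x‖) x`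
pushes the standard Gaussian measure on `ℝ^d` forward to `μ_ω`. -/
theorem stmt2 (d : ℕ) (hd : 1 ≤ d) (R : ℝ) (hR : 0 < R)
    (ω : ℝ → ℝ) (hωcont : ContinuousOn ω (Set.Ioo 0 R))
    (hωpos : ∀ s ∈ Set.Ioo (0:ℝ) R, 0 < ω s)
    (hnorm : (2 * π ^ ((d:ℝ)/2) / Real.Gamma ((d:ℝ)/2)) *
      (∫ s in (0:ℝ)..R, ω s * s ^ (d - 1)) = 1)
    (ρ : ℝ → ℝ) (hρmem : ∀ r > (0:ℝ), ρ r ∈ Set.Ioo 0 R)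
    (hρ : ∀ r > (0:ℝ),
      (∫ s in (0:ℝ)..(ρ r), ω s * s ^ (d - 1)) =
        (1 / (2 * π ^ ((d:ℝ)/2))) * lowerGamma ((d:ℝ)/2) (r^2 / 2)) :
    Measure.map (fun x : EuclideanSpace ℝ (Fin d) => (ρ ‖x‖ / ‖x‖) • x)
      (volume.withDensity
        (fun x : EuclideanSpace ℝ (Fin d) =>
          ENNReal.ofReal ((2 * π) ^ (-(d:ℝ)/2) * Real.exp (-‖x‖^2 / 2))))
    = ((volume.restrict (Metric.ball (0 : EuclideanSpace ℝ (Fin d)) R)).withDensity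
        (fun x => ENNReal.ofReal (ω ‖x‖))) := by
  have hdim : Module.finrank ℝ (EuclideanSpace ℝ (Fin d)) = d := finrank_euclideanSpace_fin
  have : Nontrivial (EuclideanSpace ℝ (Fin d)) := Module.nontrivial_of_finrank_pos (hdim ▸ hd)
  have hint : IntegrableOn (fun s => ω s * s ^ (d - 1)) (Ioc 0 R) :=
    (intervalIntegrable_iff_integrableOn_Ioc_of_le hR.le).1 <| by_contra fun h => by
      simp [intervalIntegral.integral_undef h] at hnorm
  have hFR : ∫ s in (0:ℝ)..R, ω s * s ^ (d - 1) =
      1 / (2 * π ^ ((d:ℝ) / 2)) * Gamma ((d:ℝ) / 2) := by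
    have := Gamma_pos_of_pos (by positivity : (0:ℝ) < d / 2)
    field_simp at hnorm ⊢
    linarith
  have hF := strictMonoOn_integral_of_pos (fun s hs => mul_pos (hωpos s hs) (pow_pos hs.1 _)) hint
  have hρ' : MapsTo ρ (Ioi 0) (Ioi 0) := fun r hr => (hρmem r hr).1
  have hρmono : StrictMono (hρ'.restrict ρ (Ioi 0) (Ioi 0)) := fun a b hab =>
    (hF.lt_iff_lt (Ioo_subset_Icc_self (hρmem a a.2)) (Ioo_subset_Icc_self (hρmem b b.2))).1 <| by
      simp only [hρ a a.2, hρ b b.2]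
      exact strictMonoOn_gaussianRadialCdf hd (mem_Ici.2 (le_of_lt a.2))
        (mem_Ici.2 (le_of_lt b.2)) hab
  rw [withDensity_norm_restrict_ball]
  refine map_radialMap_withDensity_norm volume
    (f := fun r => (2 * π) ^ (-(d:ℝ) / 2) * exp (-r ^ 2 / 2)) (by fun_prop)
    (hωcont.measurable_indicator measurableSet_Ioo) hρ' hρmono.monotone.measurable ?_
  rw [hdim]
  exact map_eq_of_cdf_comp_eq hF (strictMonoOn_gaussianRadialCdf hd)
    (continuousOn_gaussianRadialCdf hd) (by simp [gaussianRadialCdf_zero]) (hFR ▸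
      tendsto_gaussianRadialCdf_atTop hd) (radialMeasure.gaussian_apply_Iic hd)
    (radialMeasure.indicator_apply_Iic hR hωcont (fun s hs => (hωpos s hs).le) hint)
    hρmono.monotone.measurable (fun r => (hρmem r r.2).2) (fun r => hρ r r.2)
end

section
/- The map φ : ℝ² → ℝ² defined by φ(x) = (x/‖x‖) √(e^{‖x‖²/2} − 1) for x ≠ 0 pushes the standard Gaussian measure on ℝ² forward to the measure μ_stereo with density (1/(4π)) · 4/(1 + ‖y‖²)² with respect to Lebesgue measure (i.e., the pushforward under stereographic projection of the normalized uniform measure on the 2-sphere). -/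
/-!
Write `t = ‖x‖²` and `φ x = w t • x` with `w t = √((e^{t/2} - 1) / t)`, so that
`‖φ x‖² = t w(t)² = e^{t/2} - 1` and `φ` is a bijection of `ℝ² ∖ {0}`. In dimension two the
Jacobian of `x ↦ w(‖x‖²) • x` is `w (w + 2 t w') = (t w²)' = e^{t/2} / 2`, so the density
`1 / (π (1 + ‖y‖²)²)` at `y = φ x` times the Jacobian is `e^{t/2} / (2 π e^t) = e^{-t/2} / (2π)`,
the Gaussian density; the change of variables formula concludes.
-/

open MeasureTheory Real Set

theorem LinearMap.det_id_add_smulRight {R M : Type*} [CommRing R] [AddCommGroup M] [Module R M]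
    [Module.Free R M] [Module.Finite R M] (ℓ : M →ₗ[R] R) (v : M) :
    LinearMap.det (LinearMap.id + ℓ.smulRight v) = 1 + ℓ v := by
  classical
  let b := Module.Free.chooseBasis R M
  have hmat : LinearMap.toMatrix b b (ℓ.smulRight v) =
      Matrix.replicateCol Unit (b.repr v) * Matrix.replicateRow Unit (fun j => ℓ (b j)) := by
    ext i j
    simp [LinearMap.toMatrix_apply, Matrix.mul_apply, mul_comm]
  rw [← LinearMap.det_toMatrix b, map_add, LinearMap.toMatrix_id, hmat,
    Matrix.det_one_add_replicateCol_mul_replicateRow]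
  conv_rhs => rw [← b.sum_repr v, map_sum]
  simp only [dotProduct, map_smul, smul_eq_mul, mul_comm]

theorem map_withDensity_eq_withDensity_of_jacobian {E : Type*} [NormedAddCommGroup E]
    [NormedSpace ℝ E] [FiniteDimensional ℝ E] [MeasurableSpace E] [BorelSpace E]
    {μ : Measure E} [μ.IsAddHaarMeasure] {s : Set E} {f : E → E} {f' : E → E →L[ℝ] E}
    (hs : MeasurableSet s) (hsc : μ sᶜ = 0) (hf : Measurable f)
    (hf' : ∀ x ∈ s, HasFDerivWithinAt f (f' x) s x) (hinj : InjOn f s)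
    (himage : μ (f '' s)ᶜ = 0) {g h : E → ENNReal}
    (hg : ∀ x ∈ s, g x = ENNReal.ofReal |(f' x).det| * h (f x)) :
    Measure.map f (μ.withDensity g) = μ.withDensity h := by
  ext t ht
  have hst : MeasurableSet (s ∩ f ⁻¹' t) := hs.inter (hf ht)
  rw [Measure.map_apply hf ht, withDensity_apply _ (hf ht), withDensity_apply _ ht]
  calc ∫⁻ x in f ⁻¹' t, g x ∂μ = ∫⁻ x in s ∩ f ⁻¹' t, g x ∂μ := by
        rw [Measure.restrict_congr_set (inter_ae_eq_right_of_ae_eq_univ (ae_eq_univ.2 hsc))]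
    _ = ∫⁻ x in s ∩ f ⁻¹' t, ENNReal.ofReal |(f' x).det| * h (f x) ∂μ :=
        setLIntegral_congr_fun hst fun x hx => hg x hx.1
    _ = ∫⁻ y in f '' s ∩ t, h y ∂μ := by
        rw [← image_inter_preimage, lintegral_image_eq_lintegral_abs_det_fderiv_mul μ hst
          (fun x hx => (hf' x hx.1).mono inter_subset_left) (hinj.mono inter_subset_left)]
    _ = ∫⁻ y in t, h y ∂μ := by
        rw [Measure.restrict_congr_set (inter_ae_eq_right_of_ae_eq_univ (ae_eq_univ.2 himage))]

theorem det_smul_id_add_smulRight_innerSL {E : Type*} [NormedAddCommGroup E]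
    [InnerProductSpace ℝ E] [FiniteDimensional ℝ E] (hE : Module.finrank ℝ E = 2) (x : E)
    {a : ℝ} (ha : a ≠ 0) (c : ℝ) :
    (a • ContinuousLinearMap.id ℝ E + (c • innerSL ℝ x).smulRight x).det =
      a * (a + c * ‖x‖ ^ 2) := by
  have hfactor : (a • ContinuousLinearMap.id ℝ E + (c • innerSL ℝ x).smulRight x : E →L[ℝ] E)
      = a • (LinearMap.id + ((a⁻¹ * c) • (innerₛₗ ℝ x)).smulRight x : E →ₗ[ℝ] E) := by
    ext y
    simp [smul_smul, ← mul_assoc, mul_inv_cancel₀ ha]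
  rw [ContinuousLinearMap.det, hfactor, LinearMap.det_smul, hE, LinearMap.det_id_add_smulRight,
    LinearMap.smul_apply, innerₛₗ_apply_apply, real_inner_self_eq_norm_sq, smul_eq_mul]
  field_simp

noncomputable def gaussStereoScale (t : ℝ) : ℝ := √(exp (t / 2) - 1) / √t

theorem gaussStereoScale_pos {t : ℝ} (ht : 0 < t) : 0 < gaussStereoScale t :=
  div_pos (sqrt_pos.2 (sub_pos.2 (one_lt_exp_iff.2 (by positivity)))) (sqrt_pos.2 ht)

theorem mul_gaussStereoScale_sq {t : ℝ} (ht : 0 ≤ t) :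
    t * gaussStereoScale t ^ 2 = exp (t / 2) - 1 := by
  rcases ht.eq_or_lt with rfl | ht
  · simp
  rw [gaussStereoScale, div_pow, sq_sqrt (sub_nonneg.2 (one_le_exp (by positivity))),
    sq_sqrt ht.le]
  field_simp

theorem differentiableAt_gaussStereoScale {t : ℝ} (ht : 0 < t) :
    DifferentiableAt ℝ gaussStereoScale t :=
  (((differentiableAt_id.div_const 2).exp.sub_const 1).sqrt
    (sub_pos.2 (one_lt_exp_iff.2 (by simpa using ht))).ne').div
    (differentiableAt_id.sqrt ht.ne') (sqrt_pos.2 ht).ne'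

theorem gaussStereoScale_mul_add_deriv {t : ℝ} (ht : 0 < t) :
    gaussStereoScale t * (gaussStereoScale t + 2 * t * deriv gaussStereoScale t)
      = exp (t / 2) / 2 := by
  have hprod : HasDerivAt (fun s => s * gaussStereoScale s ^ 2)
      (gaussStereoScale t * (gaussStereoScale t + 2 * t * deriv gaussStereoScale t)) t := by
    refine ((hasDerivAt_id' t).mul
      ((differentiableAt_gaussStereoScale ht).hasDerivAt.pow 2)).congr_deriv ?_
    push_cast [Pi.pow_apply]
    ring
  have hexp : HasDerivAt (fun s => s * gaussStereoScale s ^ 2) (exp (t / 2) / 2) t := by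
    refine HasDerivAt.congr_of_eventuallyEq ?_
      (eventually_gt_nhds ht |>.mono fun s hs => mul_gaussStereoScale_sq hs.le)
    simpa [div_eq_mul_inv] using (((hasDerivAt_id t).div_const 2).exp.sub_const 1)
  exact hprod.unique hexp

section Radial

variable {E : Type*} [NormedAddCommGroup E] [InnerProductSpace ℝ E]

theorem HasDerivAt.hasFDerivAt_comp_norm_sq_smul {w : ℝ → ℝ} {w' : ℝ} {x : E}
    (hw : HasDerivAt w w' (‖x‖ ^ 2)) :
    HasFDerivAt (fun y : E => w (‖y‖ ^ 2) • y)
      (w (‖x‖ ^ 2) • ContinuousLinearMap.id ℝ E + ((2 * w') • innerSL ℝ x).smulRight x) x := by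
  convert (hw.comp_hasFDerivAt x (hasStrictFDerivAt_norm_sq x).hasFDerivAt).smul
    (hasFDerivAt_id x) using 1
  · rfl
  · congr 2
    rw [mul_comm, mul_smul, ofNat_smul_eq_nsmul]

noncomputable def gaussToStereo (x : E) : E := gaussStereoScale (‖x‖ ^ 2) • x

theorem gaussToStereo_eq (x : E) :
    gaussToStereo x = (√(exp (‖x‖ ^ 2 / 2) - 1) / ‖x‖) • x := by
  rw [gaussToStereo, gaussStereoScale, sqrt_sq (norm_nonneg x)]

theorem norm_gaussToStereo_sq (x : E) : ‖gaussToStereo x‖ ^ 2 = exp (‖x‖ ^ 2 / 2) - 1 := by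
  rw [gaussToStereo, norm_smul, mul_pow, norm_eq_abs, sq_abs, mul_comm,
    mul_gaussStereoScale_sq (by positivity)]

theorem injOn_gaussToStereo : InjOn (gaussToStereo (E := E)) {0}ᶜ := by
  intro x _ y hy hxy
  have hnorm : ‖x‖ ^ 2 = ‖y‖ ^ 2 := by
    have := norm_gaussToStereo_sq x
    rw [hxy, norm_gaussToStereo_sq y, sub_left_inj, exp_eq_exp] at this
    linarith
  have hpos : 0 < gaussStereoScale (‖y‖ ^ 2) := gaussStereoScale_pos (by positivity)
  rw [gaussToStereo, gaussToStereo, hnorm] at hxy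
  exact smul_right_injective E hpos.ne' hxy

theorem surjOn_gaussToStereo : SurjOn (gaussToStereo (E := E)) {0}ᶜ {0}ᶜ := by
  rintro y (hy : y ≠ 0)
  set t := 2 * log (1 + ‖y‖ ^ 2)
  have ht : 0 < t := mul_pos two_pos (log_pos (lt_add_of_pos_right 1 (by positivity)))
  have hscale : t * gaussStereoScale t ^ 2 = ‖y‖ ^ 2 := by
    rw [mul_gaussStereoScale_sq ht.le, mul_div_cancel_left₀ _ two_ne_zero,
      exp_log (by positivity), add_sub_cancel_left]
  have hw := (gaussStereoScale_pos ht).ne'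
  have hnorm : ‖(gaussStereoScale t)⁻¹ • y‖ ^ 2 = t := by
    rw [norm_smul, mul_pow, norm_inv, norm_eq_abs, inv_pow, sq_abs, ← hscale]
    field_simp
  refine ⟨(gaussStereoScale t)⁻¹ • y, smul_ne_zero (inv_ne_zero hw) hy, ?_⟩
  rw [gaussToStereo, hnorm, smul_inv_smul₀ hw]

theorem hasFDerivAt_gaussToStereo {x : E} (hx : x ≠ 0) :
    HasFDerivAt gaussToStereo (gaussStereoScale (‖x‖ ^ 2) • ContinuousLinearMap.id ℝ E +
      ((2 * deriv gaussStereoScale (‖x‖ ^ 2)) • innerSL ℝ x).smulRight x) x :=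
  (differentiableAt_gaussStereoScale (by positivity)).hasDerivAt
    |>.hasFDerivAt_comp_norm_sq_smul

theorem measurable_gaussToStereo [MeasurableSpace E] [BorelSpace E] :
    Measurable (gaussToStereo (E := E)) := by
  unfold gaussToStereo gaussStereoScale
  fun_prop

theorem det_fderiv_gaussToStereo [FiniteDimensional ℝ E] (hE : Module.finrank ℝ E = 2)
    {x : E} (hx : x ≠ 0) : (fderiv ℝ gaussToStereo x).det = exp (‖x‖ ^ 2 / 2) / 2 := by
  have ht : 0 < ‖x‖ ^ 2 := by positivity
  rw [(hasFDerivAt_gaussToStereo hx).fderiv,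
    det_smul_id_add_smulRight_innerSL hE x (gaussStereoScale_pos ht).ne',
    ← gaussStereoScale_mul_add_deriv ht]
  ring

end Radial

/-- The map `φ(x) = (x/‖x‖)·√(e^{‖x‖²/2} − 1)` on `ℝ²` pushes the standard Gaussian
measure forward to the measure `μ_stereo` with density `(1/(4π)) · 4/(1 + ‖y‖²)²`. -/
theorem stmt5 :
    Measure.map
      (fun x : EuclideanSpace ℝ (Fin 2) =>
        (Real.sqrt (Real.exp (‖x‖^2 / 2) - 1) / ‖x‖) • x)
      (volume.withDensity
        (fun x : EuclideanSpace ℝ (Fin 2) =>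
          ENNReal.ofReal ((1 / (2 * π)) * Real.exp (-‖x‖^2 / 2))))
    = volume.withDensity
        (fun y : EuclideanSpace ℝ (Fin 2) =>
          ENNReal.ofReal ((1 / (4 * π)) * (4 / (1 + ‖y‖^2)^2))) := by
  simp_rw [← gaussToStereo_eq]
  refine map_withDensity_eq_withDensity_of_jacobian (f' := fderiv ℝ gaussToStereo)
    (measurableSet_singleton 0).compl (by simp) measurable_gaussToStereo
    (fun x hx => (hasFDerivAt_gaussToStereo hx).differentiableAt.hasFDerivAt.hasFDerivWithinAt)
    injOn_gaussToStereo (measure_mono_null (compl_subset_compl.2 surjOn_gaussToStereo) (by simp))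
    fun x hx => ?_
  rw [det_fderiv_gaussToStereo finrank_euclideanSpace_fin hx, norm_gaussToStereo_sq,
    abs_of_pos (by positivity), ← ENNReal.ofReal_mul (by positivity), add_sub_cancel,
    neg_div, exp_neg]
  congr 1
  field_simp
end

section
/- For every measurable A ⊆ ℝ² and the map φ(x) = (x/‖x‖) · 2 arccos(e^{−‖x‖²/4}), the standard Gaussian measure of A equals the measure of φ(A) under the measure on the ball B²(0,π) with density (1/(4π)) sin(‖v‖)/‖v‖ with respect to Lebesgue measure. -/
/-!
In polar coordinates `(r, θ)` the map `φ` reads `(r, θ) ↦ (g r, θ)` with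
`g r = 2 arccos (exp (-r² / 4))`, so the change of variables formula turns the area element
`r dr dθ` into `g r g' r dr dθ`. The claim thus reduces to the one-variable identity
`g g' sin g / (4π g) = r e^{-r²/2} / (2π)`, which is `sin (2 arccos u) = 2 u √(1 - u²)` for
`u = e^{-r²/4}`. Since `g < π`, the image of `φ` lies in the ball of radius `π`.
-/

open MeasureTheory Real Set

open scoped ENNReal

noncomputable def radialMap {E : Type*} [NormedAddCommGroup E] [NormedSpace ℝ E] (g : ℝ → ℝ)
    (x : E) : E :=
  (g ‖x‖ / ‖x‖) • x

section RadialMap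

variable {E F : Type*} [NormedAddCommGroup E] [NormedSpace ℝ E] [NormedAddCommGroup F]
  [NormedSpace ℝ F] (g : ℝ → ℝ)

theorem LinearIsometryEquiv.map_radialMap (L : E ≃ₗᵢ[ℝ] F) (x : E) :
    L (radialMap g x) = radialMap g (L x) := by
  simp only [radialMap, map_smul, LinearIsometryEquiv.norm_map]

theorem norm_radialMap_le (x : E) : ‖radialMap g x‖ ≤ |g ‖x‖| := by
  rcases eq_or_ne x 0 with rfl | hx
  · simp [radialMap]
  · rw [radialMap, norm_smul, norm_div, norm_norm, Real.norm_eq_abs,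
      div_mul_cancel₀ _ (norm_ne_zero_iff.mpr hx)]

theorem radialMap_polarCoord_symm {p : ℝ × ℝ} (hp : 0 < p.1) :
    radialMap g (Complex.polarCoord.symm p) = Complex.polarCoord.symm (g p.1, p.2) := by
  rw [radialMap, Complex.norm_polarCoord_symm, abs_of_pos hp, Complex.real_smul,
    Complex.polarCoord_symm_apply, Complex.polarCoord_symm_apply, Complex.ofReal_div]
  have : (p.1 : ℂ) ≠ 0 := Complex.ofReal_ne_zero.mpr hp.ne'
  field_simp

theorem radialMap_mem_slitPlane_iff (hg : MapsTo g (Ioi 0) (Ioi 0)) {z : ℂ} :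
    radialMap g z ∈ Complex.slitPlane ↔ z ∈ Complex.slitPlane := by
  rcases eq_or_ne z 0 with rfl | hz
  · simp [radialMap]
  have hc : 0 < g ‖z‖ / ‖z‖ := div_pos (hg (norm_pos_iff.mpr hz)) (norm_pos_iff.mpr hz)
  simp only [radialMap, Complex.mem_slitPlane_iff, Complex.real_smul, Complex.re_ofReal_mul,
    Complex.im_ofReal_mul, mul_pos_iff_of_pos_left hc, mul_ne_zero_iff, ne_eq, hc.ne',
    not_false_eq_true, true_and]

end RadialMap

theorem lintegral_image_polarCoord_symm_prodMap {g g' : ℝ → ℝ}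
    (hg : ∀ r ∈ Ioi (0 : ℝ), HasDerivAt g (g' r) r) (hmaps : MapsTo g (Ioi 0) (Ioi 0))
    (hinj : InjOn g (Ioi 0)) {S : Set (ℝ × ℝ)} (hS : MeasurableSet S)
    (hST : S ⊆ polarCoord.target) (f : ℂ → ℝ≥0∞) :
    ∫⁻ z in (fun p ↦ Complex.polarCoord.symm (g p.1, p.2)) '' S, f z =
      ∫⁻ p in S, ENNReal.ofReal (g p.1 * |g' p.1|) * f (Complex.polarCoord.symm (g p.1, p.2)) := by
  have himage : (fun p ↦ Complex.polarCoord.symm (g p.1, p.2)) '' S =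
      Complex.measurableEquivRealProd ⁻¹'
        ((fun p : ℝ × ℝ ↦ polarCoord.symm (g p.1, p.2)) '' S) := by
    rw [← MeasurableEquiv.image_symm, image_image]
    rfl
  have hmapsTo : MapsTo (Prod.map g id) S polarCoord.target := fun p hp ↦
    ⟨hmaps (hST hp).1, (hST hp).2⟩
  have hderiv : ∀ p ∈ S, HasFDerivAt (fun p : ℝ × ℝ ↦ polarCoord.symm (g p.1, p.2))
      ((fderivPolarCoordSymm (g p.1, p.2)).comp
        ((ContinuousLinearMap.smulRight (1 : ℝ →L[ℝ] ℝ) (g' p.1)).prodMap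
          (ContinuousLinearMap.id ℝ ℝ))) p := fun p hp ↦
    (hasFDerivAt_polarCoord_symm _).comp p
      ((hg p.1 (hST hp).1).hasFDerivAt.prodMap p (hasFDerivAt_id p.2))
  have hinjOn : InjOn (fun p : ℝ × ℝ ↦ polarCoord.symm (g p.1, p.2)) S :=
    polarCoord.symm.injOn.comp ((hinj.prodMap (injOn_id _)).mono hST) hmapsTo
  have hpreimage := Complex.volume_preserving_equiv_real_prod.setLIntegral_comp_preimage_emb
    Complex.measurableEquivRealProd.measurableEmbedding
    (f ∘ Complex.measurableEquivRealProd.symm)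
    ((fun p : ℝ × ℝ ↦ polarCoord.symm (g p.1, p.2)) '' S)
  simp only [Function.comp_apply, MeasurableEquiv.symm_apply_apply] at hpreimage
  rw [himage, hpreimage, lintegral_image_eq_lintegral_abs_det_fderiv_mul volume hS
    (fun p hp ↦ (hderiv p hp).hasFDerivWithinAt) hinjOn]
  refine setLIntegral_congr_fun hS fun p hp ↦ ?_
  have hdet : ((fderivPolarCoordSymm (g p.1, p.2)).comp
      ((ContinuousLinearMap.smulRight (1 : ℝ →L[ℝ] ℝ) (g' p.1)).prodMap
        (ContinuousLinearMap.id ℝ ℝ))).det = g p.1 * g' p.1 := by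
    rw [ContinuousLinearMap.det, ContinuousLinearMap.toLinearMap_comp, LinearMap.det_comp,
      ← ContinuousLinearMap.det, det_fderivPolarCoordSymm]
    simp [LinearMap.det_prodMap]
  rw [hdet, abs_mul, abs_of_pos (hmaps (hST hp).1)]
  rfl

theorem lintegral_image_complexPolarCoord_symm {S : Set (ℝ × ℝ)} (hS : MeasurableSet S)
    (hST : S ⊆ polarCoord.target) (f : ℂ → ℝ≥0∞) :
    ∫⁻ z in Complex.polarCoord.symm '' S, f z =
      ∫⁻ p in S, ENNReal.ofReal p.1 * f (Complex.polarCoord.symm p) := by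
  have h := lintegral_image_polarCoord_symm_prodMap (g := id) (g' := 1)
    (fun r _ ↦ hasDerivAt_id r) (mapsTo_id _) (injOn_id _) hS hST f
  simp only [id_eq, Pi.one_apply, abs_one, mul_one] at h
  exact h

theorem Complex.slitPlane_ae_eq_univ : slitPlane =ᵐ[volume] (univ : Set ℂ) :=
  volume_preserving_equiv_real_prod.quasiMeasurePreserving.preimage_ae_eq
    polarCoord_source_ae_eq_univ

theorem lintegral_image_radialMap {g g' : ℝ → ℝ} (hg : ∀ r ∈ Ioi (0 : ℝ), HasDerivAt g (g' r) r)
    (hmaps : MapsTo g (Ioi 0) (Ioi 0)) (hinj : InjOn g (Ioi 0)) {ρ σ : ℝ → ℝ≥0∞}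
    (hρσ : ∀ r ∈ Ioi (0 : ℝ), ENNReal.ofReal (g r * |g' r|) * σ (g r) = ENNReal.ofReal r * ρ r)
    {A : Set ℂ} (hA : MeasurableSet A) :
    ∫⁻ z in radialMap g '' A, σ ‖z‖ = ∫⁻ z in A, ρ ‖z‖ := by
  set S := polarCoord.target ∩ Complex.polarCoord.symm ⁻¹' A
  have hST : S ⊆ polarCoord.target := inter_subset_left
  have hS : MeasurableSet S := polarCoord.open_target.measurableSet.inter
    ((Complex.measurableEquivRealProd.symm.measurable.comp
      continuous_polarCoord_symm.measurable) hA)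
  have hsource : Complex.polarCoord.symm '' S = A ∩ Complex.slitPlane := by
    rw [image_inter_preimage, inter_comm]
    exact congrArg (A ∩ ·) Complex.polarCoord.symm_image_target_eq_source
  have himage : (fun p ↦ Complex.polarCoord.symm (g p.1, p.2)) '' S =
      radialMap g '' A ∩ Complex.slitPlane := by
    calc _ = radialMap g '' (Complex.polarCoord.symm '' S) := by
          rw [image_image]
          exact image_congr fun p hp ↦ (radialMap_polarCoord_symm g (hST hp).1).symm
      _ = radialMap g '' (A ∩ radialMap g ⁻¹' Complex.slitPlane) := by
          rw [hsource]
          congr 2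
          ext z
          exact (radialMap_mem_slitPlane_iff g hmaps).symm
      _ = _ := image_inter_preimage ..
  calc ∫⁻ z in radialMap g '' A, σ ‖z‖
      = ∫⁻ z in radialMap g '' A ∩ Complex.slitPlane, σ ‖z‖ :=
        setLIntegral_congr (inter_ae_eq_left_of_ae_eq_univ Complex.slitPlane_ae_eq_univ).symm
    _ = ∫⁻ p in S, ENNReal.ofReal (g p.1 * |g' p.1|) * σ (g p.1) := by
        rw [← himage, lintegral_image_polarCoord_symm_prodMap hg hmaps hinj hS hST]
        refine setLIntegral_congr_fun hS fun p hp ↦ ?_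
        rw [Complex.norm_polarCoord_symm, abs_of_pos (a := g p.1) (hmaps (hST hp).1)]
    _ = ∫⁻ p in S, ENNReal.ofReal p.1 * ρ p.1 :=
        setLIntegral_congr_fun hS fun p hp ↦ hρσ p.1 (hST hp).1
    _ = ∫⁻ z in A ∩ Complex.slitPlane, ρ ‖z‖ := by
        rw [← hsource, lintegral_image_complexPolarCoord_symm hS hST]
        refine setLIntegral_congr_fun hS fun p hp ↦ ?_
        rw [Complex.norm_polarCoord_symm, abs_of_pos (hST hp).1]
    _ = ∫⁻ z in A, ρ ‖z‖ :=
        setLIntegral_congr (inter_ae_eq_left_of_ae_eq_univ Complex.slitPlane_ae_eq_univ)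

theorem lintegral_image_radialMap_of_finrank_eq_two {E : Type*} [NormedAddCommGroup E]
    [InnerProductSpace ℝ E] [FiniteDimensional ℝ E] [MeasurableSpace E] [BorelSpace E]
    (hE : Module.finrank ℝ E = 2) {g g' : ℝ → ℝ} (hg : ∀ r ∈ Ioi (0 : ℝ), HasDerivAt g (g' r) r)
    (hmaps : MapsTo g (Ioi 0) (Ioi 0)) (hinj : InjOn g (Ioi 0)) {ρ σ : ℝ → ℝ≥0∞}
    (hρσ : ∀ r ∈ Ioi (0 : ℝ), ENNReal.ofReal (g r * |g' r|) * σ (g r) = ENNReal.ofReal r * ρ r)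
    {A : Set E} (hA : MeasurableSet A) :
    ∫⁻ x in radialMap g '' A, σ ‖x‖ = ∫⁻ x in A, ρ ‖x‖ := by
  let L : ℂ ≃ₗᵢ[ℝ] E := Complex.orthonormalBasisOneI.repr.trans
    ((stdOrthonormalBasis ℝ E).reindex (finCongr hE)).repr.symm
  have hL : MeasurePreserving L := L.measurePreserving
  have hLemb : MeasurableEmbedding L := L.toHomeomorph.measurableEmbedding
  have himage : L ⁻¹' (radialMap g '' A) = radialMap g '' (L ⁻¹' A) := by
    ext z
    constructor
    · rintro ⟨x, hx, hxz⟩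
      refine ⟨L.symm x, by simpa using hx, L.injective ?_⟩
      rw [L.map_radialMap, L.apply_symm_apply, hxz]
    · rintro ⟨w, hw, rfl⟩
      exact ⟨L w, hw, (L.map_radialMap g w).symm⟩
  calc ∫⁻ x in radialMap g '' A, σ ‖x‖
      = ∫⁻ z in radialMap g '' (L ⁻¹' A), σ ‖z‖ := by
        rw [← hL.setLIntegral_comp_preimage_emb hLemb, himage]
        simp only [LinearIsometryEquiv.norm_map]
    _ = ∫⁻ z in L ⁻¹' A, ρ ‖z‖ :=
        lintegral_image_radialMap hg hmaps hinj hρσ (L.continuous.measurable hA)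
    _ = ∫⁻ x in A, ρ ‖x‖ := by
        rw [← hL.setLIntegral_comp_preimage_emb hLemb]
        simp only [LinearIsometryEquiv.norm_map]

noncomputable def gaussianToSphereRadius (r : ℝ) : ℝ := 2 * arccos (exp (-r ^ 2 / 4))

theorem exp_neg_sq_div_lt_one {r c : ℝ} (hr : 0 < r) (hc : 0 < c) : exp (-r ^ 2 / c) < 1 := by
  rw [exp_lt_one_iff, neg_div, neg_lt_zero]
  positivity

theorem exp_neg_sq_div_four_sq (r : ℝ) : exp (-r ^ 2 / 4) ^ 2 = exp (-r ^ 2 / 2) := by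
  rw [← exp_nat_mul]
  ring_nf

theorem gaussianToSphereRadius_nonneg (r : ℝ) : 0 ≤ gaussianToSphereRadius r :=
  mul_nonneg zero_le_two (arccos_nonneg _)

theorem gaussianToSphereRadius_lt_pi (r : ℝ) : gaussianToSphereRadius r < π := by
  have := arccos_lt_pi_div_two.mpr (exp_pos (-r ^ 2 / 4))
  rw [gaussianToSphereRadius]
  linarith

theorem mapsTo_gaussianToSphereRadius : MapsTo gaussianToSphereRadius (Ioi 0) (Ioi 0) :=
  fun _ hr ↦ mul_pos two_pos (arccos_pos.mpr (exp_neg_sq_div_lt_one hr four_pos))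

theorem strictMonoOn_gaussianToSphereRadius : StrictMonoOn gaussianToSphereRadius (Ici 0) := by
  intro a ha b hb hab
  have hexp : exp (-b ^ 2 / 4) < exp (-a ^ 2 / 4) := by
    rw [exp_lt_exp]
    have : a ^ 2 < b ^ 2 := pow_lt_pow_left₀ hab ha two_ne_zero
    linarith
  have hmem : ∀ c : ℝ, exp (-c ^ 2 / 4) ∈ Icc (-1) 1 := fun c ↦
    ⟨by linarith [exp_pos (-c ^ 2 / 4)], exp_le_one_iff.mpr (by nlinarith)⟩
  have := strictAntiOn_arccos (hmem b) (hmem a) hexp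
  rw [gaussianToSphereRadius, gaussianToSphereRadius]
  linarith

theorem hasDerivAt_gaussianToSphereRadius {r : ℝ} (hr : 0 < r) :
    HasDerivAt gaussianToSphereRadius
      (r * exp (-r ^ 2 / 4) / sqrt (1 - exp (-r ^ 2 / 2))) r := by
  have hu : HasDerivAt (fun t : ℝ ↦ exp (-t ^ 2 / 4)) (exp (-r ^ 2 / 4) * (-(2 * r) / 4)) r := by
    simpa using ((hasDerivAt_pow 2 r).neg.div_const 4).exp
  have hsqrt : 0 < sqrt (1 - exp (-r ^ 2 / 2)) :=
    sqrt_pos.mpr (sub_pos.mpr (exp_neg_sq_div_lt_one hr two_pos))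
  refine (((hasDerivAt_arccos (by linarith [exp_pos (-r ^ 2 / 4)])
    (exp_neg_sq_div_lt_one hr four_pos).ne).comp r hu).const_mul 2).congr_deriv ?_
  rw [exp_neg_sq_div_four_sq]
  field_simp
  ring

theorem sin_gaussianToSphereRadius (r : ℝ) :
    sin (gaussianToSphereRadius r) = 2 * exp (-r ^ 2 / 4) * sqrt (1 - exp (-r ^ 2 / 2)) := by
  rw [gaussianToSphereRadius, sin_two_mul, sin_arccos,
    cos_arccos (by linarith [exp_pos (-r ^ 2 / 4)]) (exp_le_one_iff.mpr (by nlinarith)),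
    exp_neg_sq_div_four_sq]
  ring

theorem gaussianToSphereRadius_mul_deriv_mul_sinc {r : ℝ} (hr : 0 < r) :
    gaussianToSphereRadius r * |r * exp (-r ^ 2 / 4) / sqrt (1 - exp (-r ^ 2 / 2))| *
        (1 / (4 * π) * (sin (gaussianToSphereRadius r) / gaussianToSphereRadius r)) =
      r * (1 / (2 * π) * exp (-r ^ 2 / 2)) := by
  have hg : gaussianToSphereRadius r ≠ 0 := (mapsTo_gaussianToSphereRadius hr).ne'
  have hsqrt : 0 < sqrt (1 - exp (-r ^ 2 / 2)) :=
    sqrt_pos.mpr (sub_pos.mpr (exp_neg_sq_div_lt_one hr two_pos))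
  rw [abs_of_pos (by positivity), sin_gaussianToSphereRadius]
  generalize sqrt (1 - exp (-r ^ 2 / 2)) = s at hsqrt ⊢
  rw [← exp_neg_sq_div_four_sq]
  field_simp
  ring

/-- For every measurable `A ⊆ ℝ²` and the map `φ(x) = (x/‖x‖) · 2 arccos(e^{−‖x‖²/4})`,
the standard Gaussian measure of `A` equals the measure of `φ(A)` under the measure on
the ball `B²(0,π)` with density `(1/(4π)) sin(‖v‖)/‖v‖`. -/
theorem stmt19 :
    ∀ A : Set (EuclideanSpace ℝ (Fin 2)), MeasurableSet A →
      (volume.withDensity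
        (fun x : EuclideanSpace ℝ (Fin 2) =>
          ENNReal.ofReal ((1 / (2 * π)) * Real.exp (-‖x‖^2 / 2)))) A =
      ((volume.restrict (Metric.ball (0 : EuclideanSpace ℝ (Fin 2)) π)).withDensity
        (fun v => ENNReal.ofReal ((1 / (4 * π)) * (Real.sin ‖v‖ / ‖v‖))))
        ((fun x : EuclideanSpace ℝ (Fin 2) =>
          (2 * Real.arccos (Real.exp (-‖x‖^2 / 4)) / ‖x‖) • x) '' A) := by
  intro A hA
  have hball : radialMap gaussianToSphereRadius '' A ⊆ Metric.ball 0 π := by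
    rintro _ ⟨x, -, rfl⟩
    rw [mem_ball_zero_iff]
    calc ‖radialMap gaussianToSphereRadius x‖ ≤ |gaussianToSphereRadius ‖x‖| :=
          norm_radialMap_le _ x
      _ = gaussianToSphereRadius ‖x‖ := abs_of_nonneg (gaussianToSphereRadius_nonneg _)
      _ < π := gaussianToSphereRadius_lt_pi _
  rw [withDensity_apply _ hA, withDensity_apply', Measure.restrict_restrict' measurableSet_ball]
  change _ = ∫⁻ v in radialMap gaussianToSphereRadius '' A ∩ _, _
  rw [inter_eq_left.mpr hball]
  refine (lintegral_image_radialMap_of_finrank_eq_two finrank_euclideanSpace_fin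
    (ρ := fun r ↦ ENNReal.ofReal (1 / (2 * π) * exp (-r ^ 2 / 2)))
    (σ := fun r ↦ ENNReal.ofReal (1 / (4 * π) * (sin r / r)))
    (fun r hr ↦ hasDerivAt_gaussianToSphereRadius hr) mapsTo_gaussianToSphereRadius
    (strictMonoOn_gaussianToSphereRadius.injOn.mono Ioi_subset_Ici_self) (fun r hr ↦ ?_) hA).symm
  rw [← ENNReal.ofReal_mul (mul_nonneg (gaussianToSphereRadius_nonneg r) (abs_nonneg _)),
    ← ENNReal.ofReal_mul hr.le, gaussianToSphereRadius_mul_deriv_mul_sinc hr]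
end
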